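/- Let D be a deterministic Büchi automaton with n states. Define the FDFA F whose leading automaton Q is D without acceptance, and whose progress DFA at state q consists of two copies of D starting at (q,0), moving to copy 1 upon visiting a D-accepting state and staying there, with accepting states Q × {1}. Then for every pair (u,v) ∈ Σ* × Σ⁺: (u,v) is accepted by F if and only if u·v^ω is accepted by D. Consequently F is saturated. -/

import Mathlib

open Classical

/-- `wpow v n` is the word `v` repeated `n` times. -/
def wpow {α : Type} (v : List α) : ℕ → List α
  | 0 => []
  | n + 1 => wpow v n ++ v

/-- The ultimately periodic infinite word `u·v^ω` (meaningful when `v ≠ []`). -/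
def upWord {α : Type} [Inhabited α] (u v : List α) : ℕ → α := fun n =>
  if n < u.length then u.getD n default
  else v.getD ((n - u.length) % v.length) default

/-- `l` is a prefix of the infinite word `w`. -/
def prefOf {α : Type} [Inhabited α] (l : List α) (w : ℕ → α) : Prop :=
  ∀ i < l.length, w i = l.getD i default

/-- A complete deterministic automaton (no acceptance condition). -/
structure DetAuto (α : Type) : Type 1 where
  State : Type
  [fin : Fintype State]
  init : State
  step : State → α → State

attribute [instance] DetAuto.fin

namespace DetAuto

variable {α : Type}

/-- The state reached from `q` after reading the finite word `w`. -/
def run (A : DetAuto α) (q : A.State) (w : List α) : A.State := w.foldl A.step q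

/-- The state reached from the initial state after reading `w`. -/
def eval (A : DetAuto α) (w : List α) : A.State := A.run A.init w

/-- The (infinite) run of `A` on an infinite word `w`. -/
def runSeq (A : DetAuto α) (w : ℕ → α) : ℕ → A.State
  | 0 => A.init
  | n + 1 => A.step (A.runSeq w n) (w n)

lemma exists_rep (A : DetAuto α) (u v : List α) :
    ∃ i, ∃ j, 1 ≤ j ∧ A.eval (u ++ wpow v i) = A.eval (u ++ wpow v (i + j)) := by
  obtain ⟨a, b, hab, hfab⟩ :=
    Finite.exists_ne_map_eq_of_infinite (fun n : ℕ => A.eval (u ++ wpow v n))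
  rcases Nat.lt_or_gt_of_ne hab with h | h
  · exact ⟨a, b - a, by omega, by rw [Nat.add_sub_cancel' h.le]; exact hfab⟩
  · exact ⟨b, a - b, by omega, by rw [Nat.add_sub_cancel' h.le]; exact hfab.symm⟩

/-- The least `i` in the normalization of `(u,v)` w.r.t. `A`. -/
noncomputable def normI (A : DetAuto α) (u v : List α) : ℕ :=
  Nat.find (A.exists_rep u v)

lemma normI_spec (A : DetAuto α) (u v : List α) :
    ∃ j, 1 ≤ j ∧ A.eval (u ++ wpow v (A.normI u v))
      = A.eval (u ++ wpow v (A.normI u v + j)) :=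
  Nat.find_spec (A.exists_rep u v)

/-- The least `j` in the normalization of `(u,v)` w.r.t. `A`. -/
noncomputable def normJ (A : DetAuto α) (u v : List α) : ℕ :=
  Nat.find (A.normI_spec u v)

/-- The normalization `(x, y) = (u·v^i, v^j)` of `(u,v)` w.r.t. `A`. -/
noncomputable def normalize (A : DetAuto α) (u v : List α) : List α × List α :=
  (u ++ wpow v (A.normI u v), wpow v (A.normJ u v))

/-- The product automaton. -/
def prod (A B : DetAuto α) : DetAuto α where
  State := A.State × B.State
  init := (A.init, B.init)
  step := fun p σ => (A.step p.1 σ, B.step p.2 σ)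

end DetAuto

/-- A family of DFAs: a leading automaton and a progress DFA for each of its states. -/
structure FDFA (α : Type) : Type 1 where
  leading : DetAuto α
  pState : leading.State → Type
  [pFin : ∀ q, Fintype (pState q)]
  pInit : ∀ q, pState q
  pStep : ∀ q, pState q → α → pState q
  pAcc : ∀ q, Set (pState q)

attribute [instance] FDFA.pFin

namespace FDFA

variable {α : Type}

/-- The progress DFA at state `q` accepts the finite word `y`. -/
def progAccept (F : FDFA α) (q : F.leading.State) (y : List α) : Prop :=
  y.foldl (F.pStep q) (F.pInit q) ∈ F.pAcc q

/-- `F` accepts the pair `(u, v)`: with `(x,y)` the normalization of `(u,v)` w.r.t.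
the leading automaton, the progress DFA at the state reached on `x` accepts `y`. -/
noncomputable def Accept (F : FDFA α) (u v : List α) : Prop :=
  F.progAccept (F.leading.eval (F.leading.normalize u v).1) (F.leading.normalize u v).2

/-- `F` is saturated: acceptance of `(u,v)` depends only on the infinite word `u·v^ω`. -/
def Saturated [Inhabited α] (F : FDFA α) : Prop :=
  ∀ u v u' v' : List α, v ≠ [] → v' ≠ [] → upWord u v = upWord u' v' →
    (F.Accept u v ↔ F.Accept u' v')

/-- The complement FDFA: same structure, complemented accepting states. -/
def compl (F : FDFA α) : FDFA α :=
  { F with pAcc := fun q => (F.pAcc q)ᶜ }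

end FDFA

/-- Büchi acceptance: the run visits `acc` infinitely often. -/
def buchiAccepts {α : Type} (A : DetAuto α) (acc : Set A.State) (w : ℕ → α) : Prop :=
  {n | A.runSeq w n ∈ acc}.Infinite

/-- The FDFA associated with a deterministic Büchi automaton: the leading automaton is
`A`; the progress DFA at `q` consists of two copies of `A` starting at `(q, false)`,
moving permanently to the second copy upon visiting an accepting state; its accepting
states are those in the second copy. -/
noncomputable def dbaToFdfa {α : Type} (A : DetAuto α) (acc : Set A.State) : FDFA α where
  leading := A
  pState := fun _ => A.State × Bool
  pInit := fun q => (q, false)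
  pStep := fun _ p σ =>
    (A.step p.1 σ, if A.step p.1 σ ∈ acc then true else p.2)
  pAcc := fun _ => {p | p.2 = true}

/-! The normalization `(x, y)` of `(u, v)` makes `y` a loop of `A` at `q = A.eval x`, and
`x·y^ω = u·v^ω`. So after reading `x` the run of `A` on `u·v^ω` repeats the run of `A` from `q`
on `y` forever, and it visits `acc` infinitely often iff the run from `q` visits `acc` while
reading some nonempty prefix of `y`, which is what the second copy of the progress DFA at `q`
records. -/

section Words

variable {α : Type}

lemma wpow_add (v : List α) (m n : ℕ) : wpow v (m + n) = wpow v m ++ wpow v n := by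
  induction n with
  | zero => simp [wpow]
  | succ n ih => rw [← Nat.add_assoc, wpow, wpow, ih, List.append_assoc]

lemma length_wpow (v : List α) (n : ℕ) : (wpow v n).length = n * v.length := by
  induction n with
  | zero => simp [wpow]
  | succ n ih => simp [wpow, ih, Nat.succ_mul]

variable [Inhabited α]

lemma getD_wpow (v : List α) {n k : ℕ} (hk : k < n * v.length) :
    (wpow v n).getD k default = v.getD (k % v.length) default := by
  induction n with
  | zero => simp at hk
  | succ n ih =>
    rw [wpow]
    rcases lt_or_ge k (n * v.length) with hlt | hge
    · rw [List.getD_append _ _ _ _ (by rwa [length_wpow]), ih hlt]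
    · rw [List.getD_append_right _ _ _ _ (by rwa [length_wpow]), length_wpow,
        ← Nat.sub_mul_mod (by rwa [Nat.mul_comm]), Nat.mul_comm v.length n,
        Nat.mod_eq_of_lt (by rw [Nat.succ_mul] at hk; omega)]

lemma upWord_append_wpow {u v : List α} (hv : v ≠ []) (i : ℕ) {j : ℕ} (hj : 0 < j) :
    upWord (u ++ wpow v i) (wpow v j) = upWord u v := by
  have hvpos : 0 < v.length := List.length_pos_iff.2 hv
  funext n
  simp only [upWord, List.length_append, length_wpow]
  by_cases hu : n < u.length
  · rw [if_pos (by omega), if_pos hu, List.getD_append _ _ _ _ hu]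
  rw [if_neg hu]
  by_cases hx : n < u.length + i * v.length
  · rw [if_pos hx, List.getD_append_right _ _ _ _ (by omega), getD_wpow _ (by omega)]
  rw [if_neg hx, getD_wpow _ (Nat.mod_lt _ (by positivity)),
    Nat.mod_mod_of_dvd _ (dvd_mul_left _ _), Nat.sub_add_eq, Nat.mul_comm i,
    Nat.sub_mul_mod (by rw [Nat.mul_comm]; omega)]

lemma prefOf.of_isPrefix {l l' : List α} {w : ℕ → α} (h : prefOf l w) (hl : l' <+: l) :
    prefOf l' w := by
  intro i hi
  have hi' : i < l.length := hi.trans_le hl.length_le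
  rw [h i hi', List.getD_eq_getElem _ _ hi, List.getD_eq_getElem _ _ hi', hl.getElem]

lemma prefOf_append_wpow_upWord (x y : List α) (n : ℕ) :
    prefOf (x ++ wpow y n) (upWord x y) := by
  intro i hi
  rw [List.length_append, length_wpow] at hi
  unfold upWord
  split_ifs with hx
  · rw [List.getD_append _ _ _ _ hx]
  · rw [List.getD_append_right _ _ _ _ (not_lt.1 hx), getD_wpow _ (by omega)]

end Words

namespace DetAuto

variable {α : Type} (A : DetAuto α)

lemma run_append (q : A.State) (w₁ w₂ : List α) :
    A.run q (w₁ ++ w₂) = A.run (A.run q w₁) w₂ :=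
  List.foldl_append

lemma run_wpow_of_run_eq {q : A.State} {y : List α} (hq : A.run q y = q) (k : ℕ) :
    A.run q (wpow y k) = q := by
  induction k with
  | zero => rfl
  | succ k ih => rw [wpow, run_append, ih, hq]

lemma normJ_pos (u v : List α) : 0 < A.normJ u v :=
  (Nat.find_spec (A.normI_spec u v)).1

lemma run_eval_normalize (u v : List α) :
    A.run (A.eval (A.normalize u v).1) (A.normalize u v).2 = A.eval (A.normalize u v).1 := by
  have hloop := (Nat.find_spec (A.normI_spec u v)).2
  rw [eval, ← run_append]
  simp only [normalize, List.append_assoc, ← wpow_add]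
  exact hloop.symm

lemma normalize_snd_ne_nil {u v : List α} (hv : v ≠ []) : (A.normalize u v).2 ≠ [] := by
  rw [← List.length_pos_iff, normalize, length_wpow]
  exact Nat.mul_pos (A.normJ_pos u v) (List.length_pos_iff.2 hv)

variable [Inhabited α]

lemma upWord_normalize {u v : List α} (hv : v ≠ []) :
    upWord (A.normalize u v).1 (A.normalize u v).2 = upWord u v :=
  upWord_append_wpow hv _ (A.normJ_pos u v)

lemma runSeq_of_prefOf {l : List α} {w : ℕ → α} (h : prefOf l w) :
    A.runSeq w l.length = A.eval l := by
  induction l using List.reverseRecOn with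
  | nil => rfl
  | append_singleton l a ih =>
    have ha : w l.length = a := by simpa using h l.length (by simp)
    rw [List.length_append, List.length_singleton, runSeq,
      ih (h.of_isPrefix (List.prefix_append l [a])), ha]
    exact (A.run_append A.init l [a]).symm

lemma runSeq_upWord_of_loop {x y : List α} (hloop : A.run (A.eval x) y = A.eval x)
    (k : ℕ) {m : ℕ} (hm : m ≤ y.length) :
    A.runSeq (upWord x y) (x.length + k * y.length + m) = A.run (A.eval x) (y.take m) := by
  have hpref : prefOf (x ++ wpow y k ++ y.take m) (upWord x y) := by
    refine (prefOf_append_wpow_upWord x y (k + 1)).of_isPrefix ?_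
    rw [wpow, List.append_assoc, List.prefix_append_right_inj,
      List.prefix_append_right_inj]
    exact List.take_prefix m y
  have hrun := A.runSeq_of_prefOf hpref
  rw [List.length_append, List.length_append, length_wpow, List.length_take,
    Nat.min_eq_left hm] at hrun
  rw [hrun, eval, run_append, run_append, ← eval, A.run_wpow_of_run_eq hloop]

end DetAuto

section DbaToFdfa

variable {α : Type}

theorem buchiAccepts_upWord_iff_of_loop [Inhabited α] (A : DetAuto α) (acc : Set A.State)
    {x y : List α} (hy : y ≠ []) (hloop : A.run (A.eval x) y = A.eval x) :
    buchiAccepts A acc (upWord x y) ↔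
      ∃ m < y.length, A.run (A.eval x) (y.take (m + 1)) ∈ acc := by
  have hpos : 0 < y.length := List.length_pos_iff.2 hy
  constructor
  · intro hinf
    obtain ⟨n, hn, hlt⟩ := hinf.exists_gt x.length
    have hdiv := Nat.div_add_mod' (n - x.length - 1) y.length
    set k := (n - x.length - 1) / y.length
    set r := (n - x.length - 1) % y.length
    have hr : r < y.length := Nat.mod_lt _ hpos
    have hn' : x.length + k * y.length + (r + 1) = n := by omega
    refine ⟨r, hr, ?_⟩
    rw [← A.runSeq_upWord_of_loop hloop k hr, hn']
    exact hn
  · rintro ⟨m, hm, hacc⟩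
    refine Set.infinite_of_injective_forall_mem
      (f := fun k => x.length + k * y.length + (m + 1)) (fun a b hab => ?_) (fun k => ?_)
    · simpa [hpos.ne'] using hab
    · simpa [buchiAccepts, A.runSeq_upWord_of_loop hloop k hm] using hacc

lemma snd_foldl_progressStep_iff (A : DetAuto α) (acc : Set A.State) (p : A.State) (b : Bool)
    (y : List α) :
    (y.foldl (fun p σ => (A.step p.1 σ, if A.step p.1 σ ∈ acc then true else p.2)) (p, b)).2
        = true ↔ b = true ∨ ∃ m < y.length, A.run p (y.take (m + 1)) ∈ acc := by
  induction y generalizing p b with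
  | nil => simp
  | cons σ y ih =>
    rw [List.foldl_cons, ih, List.length_cons, Nat.exists_lt_succ_left]
    by_cases h : A.step p σ ∈ acc <;> simp [h, DetAuto.run]

theorem progAccept_dbaToFdfa_iff (A : DetAuto α) (acc : Set A.State) (q : A.State)
    (y : List α) :
    (dbaToFdfa A acc).progAccept q y ↔ ∃ m < y.length, A.run q (y.take (m + 1)) ∈ acc :=
  (snd_foldl_progressStep_iff A acc q false y).trans (by simp)

end DbaToFdfa

/-- The FDFA built from a deterministic Büchi automaton `(A, acc)`
accepts `(u,v)` iff `A` Büchi-accepts `u·v^ω`; consequently it is saturated. -/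
theorem dba_to_fdfa_correct {α : Type} [Inhabited α] (A : DetAuto α)
    (acc : Set A.State) :
    (∀ u v : List α, v ≠ [] →
      ((dbaToFdfa A acc).Accept u v ↔ buchiAccepts A acc (upWord u v))) ∧
    (dbaToFdfa A acc).Saturated := by
  have accept_iff : ∀ u v : List α, v ≠ [] →
      ((dbaToFdfa A acc).Accept u v ↔ buchiAccepts A acc (upWord u v)) := fun u v hv => by
    rw [← A.upWord_normalize hv, buchiAccepts_upWord_iff_of_loop A acc
      (A.normalize_snd_ne_nil hv) (A.run_eval_normalize u v)]
    exact progAccept_dbaToFdfa_iff A acc _ _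
  refine ⟨accept_iff, fun u v u' v' hv hv' hw => ?_⟩
  rw [accept_iff u v hv, accept_iff u' v' hv', hw]
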